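/- arXiv:2504.06833 — 2 statements merged into one kernel-verified Lean document; each statement's English description precedes it below -/
import Mathlib

section
/- Symbolic parallel composition is associative: for any three symbolic labeled transition systems S₁, S₂, S₃ over the same symbol space ℰ, the composed systems (S₁ ‖_∅ S₂) ‖_∅ S₃ and S₁ ‖_∅ (S₂ ‖_∅ S₃), formed with the empty combined deduction relation and with the respective reassociation of predicate disjoint unions and state tuples, produce the same set of traces. -/
/-- A labeled transition system: a set of (relevant) events, an initial state,
and a transition relation. -/
structure LTS (State : Type*) (Ev : Type*) where
  events : Set Ev
  init : State
  step : State → Ev → State → Prop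

namespace LTS

/-- Executions of an LTS from a state, accumulating the emitted events. -/
inductive Exec {State Ev : Type*} (M : LTS State Ev) : State → List Ev → State → Prop
  | nil (s : State) : Exec M s [] s
  | cons {s s' s'' : State} {e : Ev} {tr : List Ev} :
      M.step s e s' → Exec M s' tr s'' → Exec M s (e :: tr) s''

/-- The set of (finite) traces of an LTS. -/
def Traces {State Ev : Type*} (M : LTS State Ev) : Set (List Ev) :=
  { tr | ∃ s, M.Exec M.init tr s }

end LTS

/-- A symbolic LTS: an LTS whose states consist of a symbol set, a predicate
set, and an inner state, together with a deduction relation such that every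
deducible predicate can be added to the predicate set by a silent `tau` step. -/
structure SymLTS (ℰ C Ev P : Type*) where
  toLTS : LTS (Set ℰ × Set P × C) Ev
  tau : Ev
  ded : Set P → P → Prop
  ded_step : ∀ (Sy : Set ℰ) (Ps : Set P) (φ : P) (c : C),
      ded Ps φ → toLTS.step (Sy, Ps, c) tau (Sy, insert φ Ps, c)

namespace SymLTS

def events {ℰ C Ev P : Type*} (S : SymLTS ℰ C Ev P) : Set Ev := S.toLTS.events

def Traces {ℰ C Ev P : Type*} (S : SymLTS ℰ C Ev P) : Set (List Ev) := S.toLTS.Traces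

end SymLTS

/-- Projection of a combined predicate set to the first component. -/
def projl {P₁ P₂ : Type*} (Ps : Set (P₁ ⊕ P₂)) : Set P₁ := { p | Sum.inl p ∈ Ps }

/-- Projection of a combined predicate set to the second component. -/
def projr {P₁ P₂ : Type*} (Ps : Set (P₁ ⊕ P₂)) : Set P₂ := { p | Sum.inr p ∈ Ps }

/-- The transition relation of the symbolic parallel composition of two
symbolic LTS over the same symbol space, parametric in a combined deduction
relation `dded` and a silent event `tau`. -/
inductive CompStep {ℰ C₁ C₂ Ev P₁ P₂ : Type*}
    (S₁ : SymLTS ℰ C₁ Ev P₁) (S₂ : SymLTS ℰ C₂ Ev P₂)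
    (dded : Set (P₁ ⊕ P₂) → (P₁ ⊕ P₂) → Prop) (tau : Ev) :
    (Set ℰ × Set (P₁ ⊕ P₂) × (C₁ × C₂)) → Ev →
    (Set ℰ × Set (P₁ ⊕ P₂) × (C₁ × C₂)) → Prop
  | left {Sy Sy' : Set ℰ} {Ps Ps' : Set (P₁ ⊕ P₂)} {c₁ c₁' : C₁} {c₂ : C₂} {α : Ev} :
      α ∈ S₁.events → α ∉ S₂.events →
      S₁.toLTS.step (Sy, projl Ps, c₁) α (Sy', projl Ps', c₁') →
      projr Ps = projr Ps' →
      CompStep S₁ S₂ dded tau (Sy, Ps, (c₁, c₂)) α (Sy', Ps', (c₁', c₂))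
  | right {Sy Sy' : Set ℰ} {Ps Ps' : Set (P₁ ⊕ P₂)} {c₁ : C₁} {c₂ c₂' : C₂} {α : Ev} :
      α ∈ S₂.events → α ∉ S₁.events →
      S₂.toLTS.step (Sy, projr Ps, c₂) α (Sy', projr Ps', c₂') →
      projl Ps = projl Ps' →
      CompStep S₁ S₂ dded tau (Sy, Ps, (c₁, c₂)) α (Sy', Ps', (c₁, c₂'))
  | sync {Sy Sy₁' Sy₂' : Set ℰ} {Ps Ps' : Set (P₁ ⊕ P₂)} {c₁ c₁' : C₁} {c₂ c₂' : C₂} {α : Ev} :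
      α ∈ S₁.events → α ∈ S₂.events →
      S₁.toLTS.step (Sy, projl Ps, c₁) α (Sy₁', projl Ps', c₁') →
      S₂.toLTS.step (Sy, projr Ps, c₂) α (Sy₂', projr Ps', c₂') →
      CompStep S₁ S₂ dded tau (Sy, Ps, (c₁, c₂)) α (Sy₁' ∪ Sy₂', Ps', (c₁', c₂'))
  | ded {Sy : Set ℰ} {Ps : Set (P₁ ⊕ P₂)} {π : P₁ ⊕ P₂} {c₁ : C₁} {c₂ : C₂} :
      dded Ps π →
      CompStep S₁ S₂ dded tau (Sy, Ps, (c₁, c₂)) tau (Sy, insert π Ps, (c₁, c₂))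

/-- Symbolic parallel composition of two symbolic LTS over the same symbol
space, parametric in a combined deduction relation. -/
def SymParComp {ℰ C₁ C₂ Ev P₁ P₂ : Type*}
    (S₁ : SymLTS ℰ C₁ Ev P₁) (S₂ : SymLTS ℰ C₂ Ev P₂)
    (dded : Set (P₁ ⊕ P₂) → (P₁ ⊕ P₂) → Prop) (tau : Ev) :
    SymLTS ℰ (C₁ × C₂) Ev (P₁ ⊕ P₂) where
  toLTS :=
    { events := S₁.events ∪ S₂.events
      init := (S₁.toLTS.init.1 ∪ S₂.toLTS.init.1,
               Sum.inl '' S₁.toLTS.init.2.1 ∪ Sum.inr '' S₂.toLTS.init.2.1,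
               (S₁.toLTS.init.2.2, S₂.toLTS.init.2.2))
      step := CompStep S₁ S₂ dded tau }
  tau := tau
  ded := dded
  ded_step := fun _Sy _Ps φ c h => by
    obtain ⟨a, b⟩ := c
    exact CompStep.ded h

/-- The empty combined deduction relation: it derives no predicates. -/
def emptyDed {Q : Type*} : Set Q → Q → Prop := fun _ _ => False

/-- A combined deduction relation is *enabling* (w.r.t. the composition of
`S₁` and `S₂`) if adding any predicate it derives never disables a transition
of the composed system. -/
def Enabling {ℰ C₁ C₂ Ev P₁ P₂ : Type*}
    (S₁ : SymLTS ℰ C₁ Ev P₁) (S₂ : SymLTS ℰ C₂ Ev P₂)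
    (dded : Set (P₁ ⊕ P₂) → (P₁ ⊕ P₂) → Prop) (tau : Ev) : Prop :=
  ∀ (Ps : Set (P₁ ⊕ P₂)) (π : P₁ ⊕ P₂), dded Ps π →
    ∀ (Sy Sy' : Set ℰ) (Ps' : Set (P₁ ⊕ P₂)) (c c' : C₁ × C₂) (α : Ev),
      CompStep S₁ S₂ dded tau (Sy, Ps, c) α (Sy', Ps', c') →
      CompStep S₁ S₂ dded tau (Sy, insert π Ps, c) α (Sy', insert π Ps', c')

/-- A combined deduction relation is *disabling* (w.r.t. the composition of
`S₁` and `S₂`) if adding any predicate it derives never enables a new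
transition of the composed system. -/
def Disabling {ℰ C₁ C₂ Ev P₁ P₂ : Type*}
    (S₁ : SymLTS ℰ C₁ Ev P₁) (S₂ : SymLTS ℰ C₂ Ev P₂)
    (dded : Set (P₁ ⊕ P₂) → (P₁ ⊕ P₂) → Prop) (tau : Ev) : Prop :=
  ∀ (Ps : Set (P₁ ⊕ P₂)) (π : P₁ ⊕ P₂), dded Ps π →
    ∀ (Sy Sy' : Set ℰ) (Ps' : Set (P₁ ⊕ P₂)) (c c' : C₁ × C₂) (α : Ev),
      CompStep S₁ S₂ dded tau (Sy, insert π Ps, c) α (Sy', insert π Ps', c') →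
      CompStep S₁ S₂ dded tau (Sy, Ps, c) α (Sy', Ps', c')

/-- Partially synchronized interleaving of two traces: events in `Sync`
(synchronizing events) must be taken jointly as a single occurrence, all other
events are interleaved preserving the relative order within each trace. -/
inductive Interleave {Ev : Type*} (Sync : Set Ev) : List Ev → List Ev → List Ev → Prop
  | nil : Interleave Sync [] [] []
  | left {e : Ev} {t₁ t₂ t : List Ev} :
      e ∉ Sync → Interleave Sync t₁ t₂ t → Interleave Sync (e :: t₁) t₂ (e :: t)
  | right {e : Ev} {t₁ t₂ t : List Ev} :
      e ∉ Sync → Interleave Sync t₁ t₂ t → Interleave Sync t₁ (e :: t₂) (e :: t)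
  | sync {e : Ev} {t₁ t₂ t : List Ev} :
      e ∈ Sync → Interleave Sync t₁ t₂ t → Interleave Sync (e :: t₁) (e :: t₂) (e :: t)

/-- Partially synchronized interleaving of two trace sets. -/
def interleaving {Ev : Type*} (Sync : Set Ev) (T₁ T₂ : Set (List Ev)) : Set (List Ev) :=
  { t | ∃ t₁ ∈ T₁, ∃ t₂ ∈ T₂, Interleave Sync t₁ t₂ t }

/-- CSP-style asynchronous parallel composition of two concrete LTS: events in
the intersection of the event sets synchronize, all other events are taken
asynchronously by one component while the other stays. -/
def ConcComp {SM SN Ev : Type*} (M : LTS SM Ev) (N : LTS SN Ev) : LTS (SM × SN) Ev where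
  events := M.events ∪ N.events
  init := (M.init, N.init)
  step := fun s α s' =>
    (α ∈ M.events ∧ α ∈ N.events ∧ M.step s.1 α s'.1 ∧ N.step s.2 α s'.2) ∨
    (¬(α ∈ M.events ∧ α ∈ N.events) ∧
      ((M.step s.1 α s'.1 ∧ s'.2 = s.2) ∨ (N.step s.2 α s'.2 ∧ s'.1 = s.1)))

/-- Projection of a trace to the events of one component. -/
noncomputable def projTrace {Ev : Type*} (E : Set Ev) (t : List Ev) : List Ev :=
  t.filter (fun e => @decide (e ∈ E) (Classical.propDecidable _))



section AssocAux

variable {P₁ P₂ P₃ : Type*}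

/-- Reassociation of nested predicate sums, on sets. -/
def pF (Ps : Set ((P₁ ⊕ P₂) ⊕ P₃)) : Set (P₁ ⊕ (P₂ ⊕ P₃)) :=
  (Equiv.sumAssoc P₁ P₂ P₃).symm ⁻¹' Ps

/-- Inverse reassociation of nested predicate sums, on sets. -/
def pG (Qs : Set (P₁ ⊕ (P₂ ⊕ P₃))) : Set ((P₁ ⊕ P₂) ⊕ P₃) :=
  (Equiv.sumAssoc P₁ P₂ P₃) ⁻¹' Qs

lemma proj_ext {A B : Type*} {Q Q' : Set (A ⊕ B)}
    (h1 : projl Q = projl Q') (h2 : projr Q = projr Q') : Q = Q' := by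
  ext x
  cases x with
  | inl a => exact Set.ext_iff.mp h1 a
  | inr b => exact Set.ext_iff.mp h2 b

end AssocAux

/-- Inversion for composition steps with the empty deduction relation. -/
lemma compstep_inv {ℰ C₁ C₂ Ev P₁ P₂ : Type*}
    {S₁ : SymLTS ℰ C₁ Ev P₁} {S₂ : SymLTS ℰ C₂ Ev P₂} {tau α : Ev}
    {Sy Sy' : Set ℰ} {Ps Ps' : Set (P₁ ⊕ P₂)} {c₁ c₁' : C₁} {c₂ c₂' : C₂}
    (h : CompStep S₁ S₂ emptyDed tau (Sy, Ps, (c₁, c₂)) α (Sy', Ps', (c₁', c₂'))) :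
    (α ∈ S₁.events ∧ α ∉ S₂.events
        ∧ S₁.toLTS.step (Sy, projl Ps, c₁) α (Sy', projl Ps', c₁')
        ∧ projr Ps = projr Ps' ∧ c₂' = c₂)
    ∨ (α ∈ S₂.events ∧ α ∉ S₁.events
        ∧ S₂.toLTS.step (Sy, projr Ps, c₂) α (Sy', projr Ps', c₂')
        ∧ projl Ps = projl Ps' ∧ c₁' = c₁)
    ∨ (∃ Sy₁' Sy₂', Sy' = Sy₁' ∪ Sy₂' ∧ α ∈ S₁.events ∧ α ∈ S₂.events
        ∧ S₁.toLTS.step (Sy, projl Ps, c₁) α (Sy₁', projl Ps', c₁')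
        ∧ S₂.toLTS.step (Sy, projr Ps, c₂) α (Sy₂', projr Ps', c₂')) := by
  cases h with
  | left h1 h2 h3 h4 => exact Or.inl ⟨h1, h2, h3, h4, rfl⟩
  | right h1 h2 h3 h4 => exact Or.inr (Or.inl ⟨h1, h2, h3, h4, rfl⟩)
  | sync h1 h2 h3 h4 => exact Or.inr (Or.inr ⟨_, _, rfl, h1, h2, h3, h4⟩)
  | ded hd => exact hd.elim

section AssocSim

variable {ℰ C₁ C₂ C₃ Ev P₁ P₂ P₃ : Type*}
  (S₁ : SymLTS ℰ C₁ Ev P₁) (S₂ : SymLTS ℰ C₂ Ev P₂) (S₃ : SymLTS ℰ C₃ Ev P₃)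
  (tau : Ev)

/-- Reassociation of composite states, left-assoc to right-assoc. -/
def cvF (s : Set ℰ × Set ((P₁ ⊕ P₂) ⊕ P₃) × ((C₁ × C₂) × C₃)) :
    Set ℰ × Set (P₁ ⊕ (P₂ ⊕ P₃)) × (C₁ × (C₂ × C₃)) :=
  (s.1, pF s.2.1, (s.2.2.1.1, (s.2.2.1.2, s.2.2.2)))

/-- Reassociation of composite states, right-assoc to left-assoc. -/
def cvG (s : Set ℰ × Set (P₁ ⊕ (P₂ ⊕ P₃)) × (C₁ × (C₂ × C₃))) :
    Set ℰ × Set ((P₁ ⊕ P₂) ⊕ P₃) × ((C₁ × C₂) × C₃) :=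
  (s.1, pG s.2.1, ((s.2.2.1, s.2.2.2.1), s.2.2.2.2))

lemma stepFwd {s s' : Set ℰ × Set ((P₁ ⊕ P₂) ⊕ P₃) × ((C₁ × C₂) × C₃)} {α : Ev}
    (h : CompStep (SymParComp S₁ S₂ emptyDed tau) S₃ emptyDed tau s α s') :
    CompStep S₁ (SymParComp S₂ S₃ emptyDed tau) emptyDed tau (cvF s) α (cvF s') := by
  obtain ⟨Sy, Ps, ⟨c₁, c₂⟩, c₃⟩ := s
  obtain ⟨Sy', Ps', ⟨c₁', c₂'⟩, c₃'⟩ := s'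
  change CompStep S₁ (SymParComp S₂ S₃ emptyDed tau) emptyDed tau
    (Sy, pF Ps, (c₁, (c₂, c₃))) α (Sy', pF Ps', (c₁', (c₂', c₃')))
  cases h with
  | left h1 h2 h3 h4 =>
    rcases compstep_inv h3 with ⟨a1, a2, hs, hp, hc⟩ | ⟨a2, a1, hs, hp, hc⟩ |
      ⟨Sy₁', Sy₂', rfl, a1, a2, hs1, hs2⟩
    · subst hc
      refine CompStep.left (Ps := pF Ps) (Ps' := pF Ps') a1 ?_ ?_ ?_
      · intro hm; rcases hm with hm | hm
        · exact a2 hm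
        · exact h2 hm
      · exact hs
      · exact proj_ext (Q := projr (pF Ps)) (Q' := projr (pF Ps')) hp h4
    · subst hc
      refine CompStep.right (Ps := pF Ps) (Ps' := pF Ps') ?_ a1 ?_ ?_
      · exact Set.mem_union_left _ a2
      · exact CompStep.left (Ps := projr (pF Ps)) (Ps' := projr (pF Ps')) a2 h2 hs h4
      · exact hp
    · refine CompStep.sync (Ps := pF Ps) (Ps' := pF Ps') a1 ?_ ?_ ?_
      · exact Set.mem_union_left _ a2
      · exact hs1
      · exact CompStep.left (Ps := projr (pF Ps)) (Ps' := projr (pF Ps')) a2 h2 hs2 h4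
  | right h1 h2 h3 h4 =>
    refine CompStep.right (Ps := pF Ps) (Ps' := pF Ps') ?_ ?_ ?_ ?_
    · exact Set.mem_union_right _ h1
    · exact fun hm => h2 (Set.mem_union_left _ hm)
    · refine CompStep.right (Ps := projr (pF Ps)) (Ps' := projr (pF Ps')) h1 ?_ ?_ ?_
      · exact fun hm => h2 (Set.mem_union_right _ hm)
      · exact h3
      · exact congrArg projr h4
    · exact (congrArg projl h4 : projl (projl Ps) = projl (projl Ps'))
  | sync h1 h2 hs12 hs3 =>
    rcases compstep_inv hs12 with ⟨a1, a2, hs1, hp, hc⟩ | ⟨a2, a1, hs2, hp, hc⟩ |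
      ⟨Sy₁', Sy₂', rfl, a1, a2, hs1, hs2⟩
    · subst hc
      refine CompStep.sync (Ps := pF Ps) (Ps' := pF Ps') a1 ?_ ?_ ?_
      · exact Set.mem_union_right _ h2
      · exact hs1
      · exact CompStep.right (Ps := projr (pF Ps)) (Ps' := projr (pF Ps')) h2 a2 hs3 hp
    · subst hc
      refine CompStep.right (Ps := pF Ps) (Ps' := pF Ps') ?_ a1 ?_ ?_
      · exact Set.mem_union_left _ a2
      · exact CompStep.sync (Ps := projr (pF Ps)) (Ps' := projr (pF Ps')) a2 h2 hs2 hs3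
      · exact hp
    · rw [Set.union_assoc]
      refine CompStep.sync (Ps := pF Ps) (Ps' := pF Ps') a1 ?_ ?_ ?_
      · exact Set.mem_union_left _ a2
      · exact hs1
      · exact CompStep.sync (Ps := projr (pF Ps)) (Ps' := projr (pF Ps')) a2 h2 hs2 hs3
  | ded hd => exact hd.elim

lemma stepBwd {s s' : Set ℰ × Set (P₁ ⊕ (P₂ ⊕ P₃)) × (C₁ × (C₂ × C₃))} {α : Ev}
    (h : CompStep S₁ (SymParComp S₂ S₃ emptyDed tau) emptyDed tau s α s') :
    CompStep (SymParComp S₁ S₂ emptyDed tau) S₃ emptyDed tau (cvG s) α (cvG s') := by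
  obtain ⟨Sy, Qs, c₁, c₂, c₃⟩ := s
  obtain ⟨Sy', Qs', c₁', c₂', c₃'⟩ := s'
  change CompStep (SymParComp S₁ S₂ emptyDed tau) S₃ emptyDed tau
    (Sy, pG Qs, ((c₁, c₂), c₃)) α (Sy', pG Qs', ((c₁', c₂'), c₃'))
  cases h with
  | left h1 h2 h3 h4 =>
    refine CompStep.left (Ps := pG Qs) (Ps' := pG Qs') ?_ ?_ ?_ ?_
    · exact Set.mem_union_left _ h1
    · exact fun hm => h2 (Set.mem_union_right _ hm)
    · refine CompStep.left (Ps := projl (pG Qs)) (Ps' := projl (pG Qs')) h1 ?_ ?_ ?_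
      · exact fun hm => h2 (Set.mem_union_left _ hm)
      · exact h3
      · exact congrArg projl h4
    · exact (congrArg projr h4 : projr (projr Qs) = projr (projr Qs'))
  | right h1 h2 h3 h4 =>
    rcases compstep_inv h3 with ⟨a2, a3, hs2, hp, hc⟩ | ⟨a3, a2, hs3, hp, hc⟩ |
      ⟨Sy₂', Sy₃', rfl, a2, a3, hs2, hs3⟩
    · subst hc
      refine CompStep.left (Ps := pG Qs) (Ps' := pG Qs') ?_ a3 ?_ ?_
      · exact Set.mem_union_right _ a2
      · exact CompStep.right (Ps := projl (pG Qs)) (Ps' := projl (pG Qs')) a2 h2 hs2 h4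
      · exact hp
    · subst hc
      refine CompStep.right (Ps := pG Qs) (Ps' := pG Qs') a3 ?_ ?_ ?_
      · intro hm; rcases hm with hm | hm
        · exact h2 hm
        · exact a2 hm
      · exact hs3
      · exact proj_ext (Q := projl (pG Qs)) (Q' := projl (pG Qs')) h4 hp
    · refine CompStep.sync (Ps := pG Qs) (Ps' := pG Qs') ?_ a3 ?_ ?_
      · exact Set.mem_union_right _ a2
      · exact CompStep.right (Ps := projl (pG Qs)) (Ps' := projl (pG Qs')) a2 h2 hs2 h4
      · exact hs3
  | sync h1 h23 hs1 hs23 =>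
    rcases compstep_inv hs23 with ⟨a2, a3, hs2, hp, hc⟩ | ⟨a3, a2, hs3, hp, hc⟩ |
      ⟨Sy₂', Sy₃', rfl, a2, a3, hs2, hs3⟩
    · subst hc
      refine CompStep.left (Ps := pG Qs) (Ps' := pG Qs') ?_ a3 ?_ ?_
      · exact Set.mem_union_left _ h1
      · exact CompStep.sync (Ps := projl (pG Qs)) (Ps' := projl (pG Qs')) h1 a2 hs1 hs2
      · exact hp
    · subst hc
      refine CompStep.sync (Ps := pG Qs) (Ps' := pG Qs') ?_ a3 ?_ ?_
      · exact Set.mem_union_left _ h1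
      · exact CompStep.left (Ps := projl (pG Qs)) (Ps' := projl (pG Qs')) h1 a2 hs1 hp
      · exact hs3
    · rw [← Set.union_assoc]
      refine CompStep.sync (Ps := pG Qs) (Ps' := pG Qs') ?_ a3 ?_ ?_
      · exact Set.mem_union_left _ h1
      · exact CompStep.sync (Ps := projl (pG Qs)) (Ps' := projl (pG Qs')) h1 a2 hs1 hs2
      · exact hs3
  | ded hd => exact hd.elim

lemma execFwd {s s' : Set ℰ × Set ((P₁ ⊕ P₂) ⊕ P₃) × ((C₁ × C₂) × C₃)} {tr : List Ev}
    (h : (SymParComp (SymParComp S₁ S₂ emptyDed tau) S₃ emptyDed tau).toLTS.Exec s tr s') :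
    (SymParComp S₁ (SymParComp S₂ S₃ emptyDed tau) emptyDed tau).toLTS.Exec
      (cvF s) tr (cvF s') := by
  induction h with
  | nil s => exact LTS.Exec.nil _
  | cons hstep _ ih => exact LTS.Exec.cons (stepFwd S₁ S₂ S₃ tau hstep) ih

lemma execBwd {s s' : Set ℰ × Set (P₁ ⊕ (P₂ ⊕ P₃)) × (C₁ × (C₂ × C₃))} {tr : List Ev}
    (h : (SymParComp S₁ (SymParComp S₂ S₃ emptyDed tau) emptyDed tau).toLTS.Exec s tr s') :
    (SymParComp (SymParComp S₁ S₂ emptyDed tau) S₃ emptyDed tau).toLTS.Exec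
      (cvG s) tr (cvG s') := by
  induction h with
  | nil s => exact LTS.Exec.nil _
  | cons hstep _ ih => exact LTS.Exec.cons (stepBwd S₁ S₂ S₃ tau hstep) ih

lemma cvF_init :
    cvF (SymParComp (SymParComp S₁ S₂ emptyDed tau) S₃ emptyDed tau).toLTS.init
      = (SymParComp S₁ (SymParComp S₂ S₃ emptyDed tau) emptyDed tau).toLTS.init := by
  refine Prod.ext ?_ (Prod.ext ?_ rfl)
  · exact Set.union_assoc _ _ _
  · show pF _ = _
    ext x
    rcases x with p | p | p <;>
      simp [pF, SymParComp, Equiv.sumAssoc, Set.mem_image, Set.mem_union]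

lemma cvG_init :
    cvG (SymParComp S₁ (SymParComp S₂ S₃ emptyDed tau) emptyDed tau).toLTS.init
      = (SymParComp (SymParComp S₁ S₂ emptyDed tau) S₃ emptyDed tau).toLTS.init := by
  refine Prod.ext ?_ (Prod.ext ?_ rfl)
  · exact (Set.union_assoc _ _ _).symm
  · show pG _ = _
    ext x
    rcases x with (p | p) | p <;>
      simp [pG, SymParComp, Equiv.sumAssoc, Set.mem_image, Set.mem_union]

end AssocSim

/-- **Associativity of symbolic parallel composition:** composing with the
empty combined deduction relation, `(S₁ ‖_∅ S₂) ‖_∅ S₃` and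
`S₁ ‖_∅ (S₂ ‖_∅ S₃)` produce the same set of traces. -/
theorem symbolic_parallel_composition_associative
    {ℰ C₁ C₂ C₃ Ev P₁ P₂ P₃ : Type*}
    (S₁ : SymLTS ℰ C₁ Ev P₁) (S₂ : SymLTS ℰ C₂ Ev P₂) (S₃ : SymLTS ℰ C₃ Ev P₃)
    (tau : Ev) :
    (SymParComp (SymParComp S₁ S₂ emptyDed tau) S₃ emptyDed tau).Traces
      = (SymParComp S₁ (SymParComp S₂ S₃ emptyDed tau) emptyDed tau).Traces := by
  ext tr
  constructor
  · rintro ⟨s, hs⟩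
    exact ⟨cvF s, cvF_init S₁ S₂ S₃ tau ▸ execFwd S₁ S₂ S₃ tau hs⟩
  · rintro ⟨s, hs⟩
    exact ⟨cvG s, cvG_init S₁ S₂ S₃ tau ▸ execBwd S₁ S₂ S₃ tau hs⟩
end

section
/- Composition of Dolev-Yao libraries with the same signature: for any function signature ℱ, let L(ℱ) denote the Dolev-Yao library symbolic LTS over ℱ. Then the traces of the symbolic parallel composition of two copies of L(ℱ) with the empty combined deduction relation equal the partially synchronized interleaving of their trace sets: Traces(L(ℱ) ‖_∅ L(ℱ)) = Traces(L(ℱ)) ⊗ Traces(L(ℱ)). -/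
/-- Events of a Dolev-Yao library: fresh-name synchronization `sfr`,
silent freshness bookkeeping `silent`, library calls `fcall`, and the silent
event `tau`. -/
inductive DYEvent (ℰ N F : Type*) where
  | sfr : N → DYEvent ℰ N F
  | silent : N → DYEvent ℰ N F
  | fcall : F → List ℰ → ℰ → DYEvent ℰ N F
  | tau : DYEvent ℰ N F

/-- Predicates of a Dolev-Yao library: freshness facts and call-equalities
`y ↦ f(x₁,…,xₙ)`. -/
inductive DYLibPred (ℰ N F : Type*) where
  | freshL : N → DYLibPred ℰ N F
  | callEq : ℰ → F → List ℰ → DYLibPred ℰ N F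

/-- Transition rules of the Dolev-Yao library over the signature `sig` with
arities `ar` and private names `priv`. -/
inductive DYLibStep {ℰ N F : Type*} (priv : Set N) (sig : Set F) (ar : F → ℕ) :
    (Set ℰ × Set (DYLibPred ℰ N F) × Unit) → DYEvent ℰ N F →
    (Set ℰ × Set (DYLibPred ℰ N F) × Unit) → Prop
  | frL2A {Sy : Set ℰ} {Ps : Set (DYLibPred ℰ N F)} {n : N} :
      n ∈ priv → DYLibPred.freshL n ∉ Ps →
      DYLibStep priv sig ar (Sy, Ps, ()) (DYEvent.sfr n)
        (Sy, insert (DYLibPred.freshL n) Ps, ())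
  | frA2L {Sy : Set ℰ} {Ps : Set (DYLibPred ℰ N F)} {n : N} :
      n ∈ priv → DYLibPred.freshL n ∉ Ps →
      DYLibStep priv sig ar (Sy, Ps, ()) (DYEvent.silent n)
        (Sy, insert (DYLibPred.freshL n) Ps, ())
  | fcall {Sy : Set ℰ} {Ps : Set (DYLibPred ℰ N F)} {f : F} {xs : List ℰ} {y : ℰ} :
      f ∈ sig → xs.length = ar f → (∀ x ∈ xs, x ∈ Sy) → y ∉ Sy →
      DYLibStep priv sig ar (Sy, Ps, ()) (DYEvent.fcall f xs y)
        (insert y Sy, insert (DYLibPred.callEq y f xs) Ps, ())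

/-- The events of the Dolev-Yao library over the signature `sig`. -/
def DYLibEvents {ℰ N F : Type*} (sig : Set F) : Set (DYEvent ℰ N F) :=
  { e | match e with
        | DYEvent.sfr _ => True
        | DYEvent.silent _ => True
        | DYEvent.fcall f _ _ => f ∈ sig
        | DYEvent.tau => False }

/-- The Dolev-Yao library as a (stateless) symbolic LTS. -/
def DYLib {ℰ N F : Type*} (priv : Set N) (sig : Set F) (ar : F → ℕ) :
    SymLTS ℰ Unit (DYEvent ℰ N F) (DYLibPred ℰ N F) where
  toLTS :=
    { events := DYLibEvents sig
      init := (∅, ∅, ())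
      step := DYLibStep priv sig ar }
  tau := DYEvent.tau
  ded := fun _ _ => False
  ded_step := fun _ _ _ _ h => h.elim

section Aux

variable {ℰ N F : Type*} {priv : Set N} {sig : Set F} {ar : F → ℕ}

lemma projl_mk {P₁ P₂ : Type*} (A : Set P₁) (B : Set P₂) :
    projl (Sum.inl '' A ∪ Sum.inr '' B) = A := by
  ext p; simp [projl]

lemma projr_mk {P₁ P₂ : Type*} (A : Set P₁) (B : Set P₂) :
    projr (Sum.inl '' A ∪ Sum.inr '' B) = B := by
  ext p; simp [projr]

/-- The new symbol set after a Dolev-Yao library step, determined by the event. -/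
def syOf {ℰ N F : Type*} (e : DYEvent ℰ N F) (Sy : Set ℰ) : Set ℰ :=
  match e with
  | DYEvent.fcall _ _ y => insert y Sy
  | _ => Sy

lemma dy_step_sy {Sy Sy' : Set ℰ} {Ps Ps' : Set (DYLibPred ℰ N F)} {u u' : Unit}
    {e : DYEvent ℰ N F}
    (h : DYLibStep priv sig ar (Sy, Ps, u) e (Sy', Ps', u')) : Sy' = syOf e Sy := by
  cases h <;> rfl

lemma dy_step_ev {s s' : Set ℰ × Set (DYLibPred ℰ N F) × Unit} {e : DYEvent ℰ N F}
    (h : DYLibStep priv sig ar s e s') : e ∈ DYLibEvents sig := by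
  cases h <;> trivial

lemma dy_exec_ev {s s' : Set ℰ × Set (DYLibPred ℰ N F) × Unit}
    {tr : List (DYEvent ℰ N F)}
    (h : LTS.Exec (DYLib (ℰ := ℰ) priv sig ar).toLTS s tr s') :
    ∀ e ∈ tr, e ∈ DYLibEvents sig := by
  induction h with
  | nil => simp
  | cons hstep _ ih =>
    intro e he
    rcases List.mem_cons.mp he with rfl | he
    · exact dy_step_ev hstep
    · exact ih e he

lemma comp_forward :
    ∀ (tr : List (DYEvent ℰ N F)) (Sy : Set ℰ)
      (Ps : Set (DYLibPred ℰ N F ⊕ DYLibPred ℰ N F)) (c : Unit × Unit)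
      (s' : Set ℰ × Set (DYLibPred ℰ N F ⊕ DYLibPred ℰ N F) × (Unit × Unit)),
      LTS.Exec (SymParComp (DYLib (ℰ := ℰ) priv sig ar) (DYLib (ℰ := ℰ) priv sig ar)
          emptyDed DYEvent.tau).toLTS (Sy, Ps, c) tr s' →
      (∃ t, LTS.Exec (DYLib (ℰ := ℰ) priv sig ar).toLTS (Sy, projl Ps, ()) tr t) ∧
      (∃ t, LTS.Exec (DYLib (ℰ := ℰ) priv sig ar).toLTS (Sy, projr Ps, ()) tr t) := by
  intro tr
  induction tr with
  | nil =>
    intro Sy Ps c s' _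
    exact ⟨⟨_, LTS.Exec.nil _⟩, ⟨_, LTS.Exec.nil _⟩⟩
  | cons e tr ih =>
    intro Sy Ps c s' h
    obtain ⟨c₁, c₂⟩ := c
    cases h with
    | cons hstep hexec =>
      cases hstep with
      | left h₁ h₂ _ _ => exact absurd h₁ h₂
      | right h₁ h₂ _ _ => exact absurd h₁ h₂
      | ded hd => exact hd.elim
      | @sync _ Sy₁' Sy₂' _ Ps' _ c₁' _ c₂' _ h₁ h₂ st₁ st₂ =>
        have e₁ : Sy₁' = syOf e Sy := dy_step_sy st₁
        have e₂ : Sy₂' = syOf e Sy := dy_step_sy st₂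
        have hu : Sy₁' ∪ Sy₂' = Sy₁' := by rw [e₁, e₂]; exact Set.union_self _
        rw [hu] at hexec
        obtain ⟨⟨a, ex₁⟩, ⟨b, ex₂⟩⟩ := ih Sy₁' Ps' (c₁', c₂') s' hexec
        have ex₂' : (DYLib (ℰ := ℰ) priv sig ar).toLTS.Exec (Sy₂', projr Ps', ()) tr b := by
          rw [e₂, ← e₁]; exact ex₂
        exact ⟨⟨a, LTS.Exec.cons st₁ ex₁⟩, ⟨b, LTS.Exec.cons st₂ ex₂'⟩⟩

lemma comp_backward :
    ∀ (tr : List (DYEvent ℰ N F)) (Sy : Set ℰ) (Q₁ Q₂ : Set (DYLibPred ℰ N F))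
      (Ps : Set (DYLibPred ℰ N F ⊕ DYLibPred ℰ N F))
      (t₁ t₂ : Set ℰ × Set (DYLibPred ℰ N F) × Unit),
      LTS.Exec (DYLib (ℰ := ℰ) priv sig ar).toLTS (Sy, Q₁, ()) tr t₁ →
      LTS.Exec (DYLib (ℰ := ℰ) priv sig ar).toLTS (Sy, Q₂, ()) tr t₂ →
      projl Ps = Q₁ → projr Ps = Q₂ →
      ∃ s', LTS.Exec (SymParComp (DYLib (ℰ := ℰ) priv sig ar) (DYLib (ℰ := ℰ) priv sig ar)
          emptyDed DYEvent.tau).toLTS (Sy, Ps, ((), ())) tr s' := by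
  intro tr
  induction tr with
  | nil =>
    intro Sy Q₁ Q₂ Ps t₁ t₂ _ _ _ _
    exact ⟨_, LTS.Exec.nil _⟩
  | cons e tr ih =>
    intro Sy Q₁ Q₂ Ps t₁ t₂ h₁ h₂ hpl hpr
    cases h₁ with
    | cons st₁ hex₁ =>
      cases h₂ with
      | cons st₂ hex₂ =>
        rename_i m₁ m₂
        obtain ⟨S₁', Q₁', u₁⟩ := m₁
        obtain ⟨S₂', Q₂', u₂⟩ := m₂
        have e₁ : S₁' = syOf e Sy := dy_step_sy st₁
        have e₂ : S₂' = syOf e Sy := dy_step_sy st₂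
        have hev : e ∈ DYLibEvents (ℰ := ℰ) (N := N) sig := dy_step_ev st₁
        set Ps' : Set (DYLibPred ℰ N F ⊕ DYLibPred ℰ N F) :=
          Sum.inl '' Q₁' ∪ Sum.inr '' Q₂' with hPs'
        have hl : projl Ps' = Q₁' := projl_mk _ _
        have hr : projr Ps' = Q₂' := projr_mk _ _
        have st₁' : (DYLib (ℰ := ℰ) priv sig ar).toLTS.step (Sy, projl Ps, ()) e
            (S₁', projl Ps', ()) := by rw [hpl, hl]; exact st₁
        have st₂' : (DYLib (ℰ := ℰ) priv sig ar).toLTS.step (Sy, projr Ps, ()) e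
            (S₂', projr Ps', ()) := by rw [hpr, hr]; exact st₂
        have hstep : CompStep (DYLib (ℰ := ℰ) priv sig ar) (DYLib (ℰ := ℰ) priv sig ar)
            emptyDed DYEvent.tau (Sy, Ps, ((), ())) e (S₁' ∪ S₂', Ps', ((), ())) :=
          CompStep.sync hev hev st₁' st₂'
        have hun : S₁' ∪ S₂' = S₁' := by rw [e₁, e₂]; exact Set.union_self _
        have hex₂' : LTS.Exec (DYLib (ℰ := ℰ) priv sig ar).toLTS (S₁', Q₂', ()) tr t₂ := by
          rw [e₁, ← e₂]; exact hex₂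
        obtain ⟨s'', hcomp⟩ := ih S₁' Q₁' Q₂' Ps' t₁ t₂ hex₁ hex₂' hl hr
        rw [← hun] at hcomp
        exact ⟨s'', LTS.Exec.cons hstep hcomp⟩

lemma interleave_self {Ev : Type*} {Sync : Set Ev} :
    ∀ {t : List Ev}, (∀ e ∈ t, e ∈ Sync) → Interleave Sync t t t := by
  intro t
  induction t with
  | nil => intro _; exact Interleave.nil
  | cons e t ih =>
    intro h
    exact Interleave.sync (h e (by simp)) (ih fun f hf => h f (by simp [hf]))

lemma interleave_all_sync {Ev : Type*} {Sync : Set Ev} :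
    ∀ {t₁ t₂ t : List Ev}, Interleave Sync t₁ t₂ t →
      (∀ e ∈ t₁, e ∈ Sync) → (∀ e ∈ t₂, e ∈ Sync) → t₁ = t ∧ t₂ = t := by
  intro t₁ t₂ t h
  induction h with
  | nil => exact fun _ _ => ⟨rfl, rfl⟩
  | left hns _ ih => exact fun h₁ _ => absurd (h₁ _ (by simp)) hns
  | right hns _ ih => exact fun _ h₂ => absurd (h₂ _ (by simp)) hns
  | sync hs _ ih =>
    intro h₁ h₂
    obtain ⟨r₁, r₂⟩ := ih (fun f hf => h₁ f (by simp [hf])) (fun f hf => h₂ f (by simp [hf]))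
    exact ⟨by rw [r₁], by rw [r₂]⟩

end Aux

/-- **Composition of Dolev-Yao libraries with the same signature:** the traces
of the symbolic parallel composition of two copies of `L(ℱ)` with the empty
combined deduction relation equal the partially synchronized interleaving of
their trace sets. -/
theorem dylib_composition_same_signature
    {ℰ N F : Type*} (priv : Set N) (sig : Set F) (ar : F → ℕ) :
    (SymParComp (DYLib (ℰ := ℰ) priv sig ar) (DYLib (ℰ := ℰ) priv sig ar)
        emptyDed DYEvent.tau).Traces
      = interleaving
          ((DYLib (ℰ := ℰ) priv sig ar).events ∩ (DYLib (ℰ := ℰ) priv sig ar).events)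
          (DYLib (ℰ := ℰ) priv sig ar).Traces (DYLib (ℰ := ℰ) priv sig ar).Traces := by
  ext t
  constructor
  · rintro ⟨s, hs⟩
    have hinit : (SymParComp (DYLib (ℰ := ℰ) priv sig ar) (DYLib (ℰ := ℰ) priv sig ar)
        emptyDed DYEvent.tau).toLTS.init
        = ((∅ : Set ℰ), (∅ : Set (DYLibPred ℰ N F ⊕ DYLibPred ℰ N F)), ((), ())) := by
      simp [SymParComp, DYLib]
    rw [hinit] at hs
    obtain ⟨⟨a, ex₁⟩, ⟨b, ex₂⟩⟩ := comp_forward t ∅ ∅ ((), ()) s hs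
    have hpl : projl (∅ : Set (DYLibPred ℰ N F ⊕ DYLibPred ℰ N F)) = ∅ := by
      ext p; simp [projl]
    have hpr : projr (∅ : Set (DYLibPred ℰ N F ⊕ DYLibPred ℰ N F)) = ∅ := by
      ext p; simp [projr]
    rw [hpl] at ex₁
    rw [hpr] at ex₂
    refine ⟨t, ⟨a, ex₁⟩, t, ⟨b, ex₂⟩, ?_⟩
    have hev := dy_exec_ev ex₁
    exact interleave_self fun e he => ⟨hev e he, hev e he⟩
  · rintro ⟨t₁, ⟨a, ex₁⟩, t₂, ⟨b, ex₂⟩, hint⟩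
    have hev₁ := dy_exec_ev ex₁
    have hev₂ := dy_exec_ev ex₂
    obtain ⟨r₁, r₂⟩ := interleave_all_sync hint
      (fun e he => ⟨hev₁ e he, hev₁ e he⟩) (fun e he => ⟨hev₂ e he, hev₂ e he⟩)
    rw [r₁] at ex₁
    rw [r₂] at ex₂
    have hpl : projl (∅ : Set (DYLibPred ℰ N F ⊕ DYLibPred ℰ N F)) = ∅ := by
      ext p; simp [projl]
    have hpr : projr (∅ : Set (DYLibPred ℰ N F ⊕ DYLibPred ℰ N F)) = ∅ := by
      ext p; simp [projr]
    obtain ⟨s', hcomp⟩ := comp_backward t ∅ ∅ ∅ ∅ a b ex₁ ex₂ hpl hpr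
    have hinit : (SymParComp (DYLib (ℰ := ℰ) priv sig ar) (DYLib (ℰ := ℰ) priv sig ar)
        emptyDed DYEvent.tau).toLTS.init
        = ((∅ : Set ℰ), (∅ : Set (DYLibPred ℰ N F ⊕ DYLibPred ℰ N F)), ((), ())) := by
      simp [SymParComp, DYLib]
    refine ⟨s', ?_⟩
    show LTS.Exec (SymParComp (DYLib (ℰ := ℰ) priv sig ar) (DYLib (ℰ := ℰ) priv sig ar)
        emptyDed DYEvent.tau).toLTS (SymParComp (DYLib (ℰ := ℰ) priv sig ar)
        (DYLib (ℰ := ℰ) priv sig ar) emptyDed DYEvent.tau).toLTS.init t s'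
    rw [hinit]
    exact hcomp
end
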